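/- arXiv:2307.05144 — 5 statements merged into one kernel-verified Lean document; each statement's English description precedes it below -/
import Mathlib

section
/- Let τ_L > |δ_L + 1| and τ_R < -|δ_R + 1|, let λ_L^u > 1 and λ_L^s ∈ (-1,1) be the eigenvalues of A_L = [[τ_L, 1], [-δ_L, 0]], and suppose φ₁ := δ_R - τ_R λ_L^u > 0. Define C₁ = 1 + φ₃/((λ_L^u - 1)φ₁) where φ₃ = δ_R - (δ_R + τ_R - (τ_R + 1)λ_L^u)λ_L^u, and set f(C) = (τ_R C₁ + 1, -δ_R C₁). Then f(C) lies on the line y = -λ_L^u x - λ_L^u/(λ_L^u - 1). -/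
/-! With `λ = λ_L^u`, `(λ - 1) φ₁ + φ₃ = λ²`, so `C₁ = λ² / ((λ - 1) φ₁)`, i.e. `φ₁ C₁ = λ² / (λ - 1)`;
moving `τ_R C₁` across, this is exactly the equation of the line at `f(C)`. -/

section

variable {K : Type*} [Field K]

theorem sub_one_mul_add_eq_sq (τ δ l : K) :
    (l - 1) * (δ - τ * l) + (δ - (δ + τ - (τ + 1) * l) * l) = l ^ 2 := by
  ring

theorem one_add_div_eq_sq_div {τ δ l φ₁ : K} (hl : l - 1 ≠ 0) (hφ₁ : φ₁ = δ - τ * l)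
    (hφ₁0 : φ₁ ≠ 0) :
    1 + (δ - (δ + τ - (τ + 1) * l) * l) / ((l - 1) * φ₁) = l ^ 2 / ((l - 1) * φ₁) := by
  rw [← sub_one_mul_add_eq_sq τ δ l, ← hφ₁, add_div, div_self (mul_ne_zero hl hφ₁0)]

end

theorem stmt_7_general (τR δR : ℝ)
    (lu : ℝ) (hlu : lu > 1)
    (φ1 : ℝ) (hφ1 : φ1 = δR - τR * lu) (hφ1pos : φ1 > 0)
    (φ3 : ℝ) (hφ3 : φ3 = δR - (δR + τR - (τR + 1) * lu) * lu)
    (C1 : ℝ) (hC1 : C1 = 1 + φ3 / ((lu - 1) * φ1)) :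
    -δR * C1 = -lu * (τR * C1 + 1) - lu / (lu - 1) := by
  have hlu' : lu - 1 ≠ 0 := by linarith
  rw [hC1, hφ3, one_add_div_eq_sq_div hlu' hφ1 hφ1pos.ne']
  field_simp
  linear_combination lu * hφ1

theorem stmt_7 (τL δL τR δR : ℝ) (hL : τL > |δL + 1|) (hR : τR < -|δR + 1|)
    (lu ls : ℝ) (hrootu : lu ^ 2 - τL * lu + δL = 0) (hlu : lu > 1)
    (hroots : ls ^ 2 - τL * ls + δL = 0) (hls : ls ∈ Set.Ioo (-1 : ℝ) 1)
    (φ1 : ℝ) (hφ1 : φ1 = δR - τR * lu) (hφ1pos : φ1 > 0)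
    (φ3 : ℝ) (hφ3 : φ3 = δR - (δR + τR - (τR + 1) * lu) * lu)
    (C1 : ℝ) (hC1 : C1 = 1 + φ3 / ((lu - 1) * φ1)) :
    -δR * C1 = -lu * (τR * C1 + 1) - lu / (lu - 1) :=
  stmt_7_general τR δR lu hlu φ1 hφ1 hφ1pos φ3 hφ3 C1 hC1
end

section
/- Under the assumptions τ_L > |δ_L + 1|, τ_R < -|δ_R + 1|, and φ₁ := δ_R - τ_R λ_L^u > 0, the first coordinate of f(C) = (τ_R C₁ + 1, -δ_R C₁), namely ((τ_R + δ_R)(λ_L^u - 1) + τ_R)/((λ_L^u - 1)φ₁), is negative. -/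
/-! Over the common denominator `(λ - 1) φ₁`, the quadratic terms in `λ` of the numerator of
`τ_R C₁ + 1` cancel, leaving `(τ_R + δ_R)(λ - 1) + τ_R`. Both summands are negative because
`τ_R < -|δ_R + 1|` forces `τ_R < 0` and `τ_R + δ_R < -1`, while the denominator is positive. -/

lemma add_lt_neg_one_of_lt_neg_abs {τ δ : ℝ} (h : τ < -|δ + 1|) : τ + δ < -1 := by
  linarith [le_abs_self (δ + 1)]

lemma neg_of_lt_neg_abs {τ a : ℝ} (h : τ < -|a|) : τ < 0 := by
  linarith [abs_nonneg a]

lemma mul_one_add_div_add_one_eq {τ δ l φ₁ φ₃ : ℝ} (hl : l ≠ 1) (hφ₁ : φ₁ = δ - τ * l)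
    (hφ₁0 : φ₁ ≠ 0) (hφ₃ : φ₃ = δ - (δ + τ - (τ + 1) * l) * l) :
    τ * (1 + φ₃ / ((l - 1) * φ₁)) + 1 = ((τ + δ) * (l - 1) + τ) / ((l - 1) * φ₁) := by
  have hl1 : l - 1 ≠ 0 := sub_ne_zero.mpr hl
  field_simp
  subst hφ₁ hφ₃
  ring

theorem stmt_8_general (τR δR : ℝ) (hR : τR < -|δR + 1|)
    (lu : ℝ) (hlu : lu > 1)
    (φ1 : ℝ) (hφ1 : φ1 = δR - τR * lu) (hφ1pos : φ1 > 0)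
    (φ3 : ℝ) (hφ3 : φ3 = δR - (δR + τR - (τR + 1) * lu) * lu)
    (C1 : ℝ) (hC1 : C1 = 1 + φ3 / ((lu - 1) * φ1)) :
    τR * C1 + 1 = ((τR + δR) * (lu - 1) + τR) / ((lu - 1) * φ1) ∧
      ((τR + δR) * (lu - 1) + τR) / ((lu - 1) * φ1) < 0 := by
  have hlu1 : 0 < lu - 1 := sub_pos.mpr hlu
  refine ⟨hC1 ▸ mul_one_add_div_add_one_eq hlu.ne' hφ1 hφ1pos.ne' hφ3, ?_⟩
  have hsum : τR + δR < 0 := by linarith [add_lt_neg_one_of_lt_neg_abs hR]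
  have hnum : (τR + δR) * (lu - 1) + τR < 0 :=
    add_neg (mul_neg_of_neg_of_pos hsum hlu1) (neg_of_lt_neg_abs hR)
  exact div_neg_of_neg_of_pos hnum (mul_pos hlu1 hφ1pos)

theorem stmt_8 (τL δL τR δR : ℝ) (hL : τL > |δL + 1|) (hR : τR < -|δR + 1|)
    (lu : ℝ) (hrootu : lu ^ 2 - τL * lu + δL = 0) (hlu : lu > 1)
    (φ1 : ℝ) (hφ1 : φ1 = δR - τR * lu) (hφ1pos : φ1 > 0)
    (φ3 : ℝ) (hφ3 : φ3 = δR - (δR + τR - (τR + 1) * lu) * lu)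
    (C1 : ℝ) (hC1 : C1 = 1 + φ3 / ((lu - 1) * φ1)) :
    τR * C1 + 1 = ((τR + δR) * (lu - 1) + τR) / ((lu - 1) * φ1) ∧
      ((τR + δR) * (lu - 1) + τR) / ((lu - 1) * φ1) < 0 :=
  stmt_8_general τR δR hR lu hlu φ1 hφ1 hφ1pos φ3 hφ3 C1 hC1
end

section
/- Let τ_L, δ_L ∈ ℝ with τ_L > |δ_L + 1|, and suppose δ_L < τ_L²/4 and δ_L ≠ 0 so that the fixed-point equation -δ_L/(τ_L + m) = m has two real solutions. Then the solution r_L = -(τ_L/2)(1 + √(1 - 4δ_L/τ_L²)) satisfies r_L < (1 - δ_L² - τ_L²)/(2τ_L). -/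
/-! With `t = √(τ² - 4δ)` the root is `-(τ + t)/2`, so the claim is `δ² - 1 < τ t`. Since
`(δ + 1)² - 4δ = (δ - 1)²`, the hypothesis `|δ + 1| < τ` gives `|δ - 1| < t`, and multiplying
the two bounds yields `δ² - 1 ≤ |δ + 1| |δ - 1| < τ t`. -/

lemma Real.neg_half_mul_one_add_sqrt_one_sub_div_sq {τ : ℝ} (hτ : 0 < τ) (δ : ℝ) :
    -(τ / 2) * (1 + √(1 - 4 * δ / τ ^ 2)) = -(τ + √(τ ^ 2 - 4 * δ)) / 2 := by
  have hsqrt : √(1 - 4 * δ / τ ^ 2) = √(τ ^ 2 - 4 * δ) / τ := by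
    rw [show 1 - 4 * δ / τ ^ 2 = (τ ^ 2 - 4 * δ) / τ ^ 2 by field_simp,
      Real.sqrt_div' _ (sq_nonneg τ), Real.sqrt_sq hτ.le]
  rw [hsqrt]
  field_simp

lemma abs_sub_one_lt_sqrt_sq_sub {τ δ : ℝ} (h : |δ + 1| < τ) :
    |δ - 1| < √(τ ^ 2 - 4 * δ) := by
  have hτ : |δ + 1| < |τ| := h.trans_le (le_abs_self τ)
  rw [Real.lt_sqrt (abs_nonneg _), sq_abs]
  linarith [sq_lt_sq.mpr hτ]

lemma sq_sub_one_lt_mul_sqrt_sq_sub {τ δ : ℝ} (h : |δ + 1| < τ) :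
    δ ^ 2 - 1 < τ * √(τ ^ 2 - 4 * δ) :=
  calc δ ^ 2 - 1 ≤ |δ + 1| * |δ - 1| := by
        rw [← abs_mul]; exact (le_abs_self _).trans_eq' (by ring)
    _ < τ * √(τ ^ 2 - 4 * δ) :=
        mul_lt_mul'' h (abs_sub_one_lt_sqrt_sq_sub h) (abs_nonneg _) (abs_nonneg _)

theorem stmt_11_general (τL δL : ℝ) (h : τL > |δL + 1|) :
    -(τL / 2) * (1 + Real.sqrt (1 - 4 * δL / τL ^ 2)) <
      (1 - δL ^ 2 - τL ^ 2) / (2 * τL) := by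
  have hτ : 0 < τL := (abs_nonneg _).trans_lt h
  rw [Real.neg_half_mul_one_add_sqrt_one_sub_div_sq hτ, lt_div_iff₀ (by positivity)]
  linarith [sq_sub_one_lt_mul_sqrt_sq_sub h]

theorem stmt_11 (τL δL : ℝ) (h : τL > |δL + 1|)
    (hδ : δL < τL ^ 2 / 4) (hδ0 : δL ≠ 0) :
    -(τL / 2) * (1 + Real.sqrt (1 - 4 * δL / τL ^ 2)) <
      (1 - δL ^ 2 - τL ^ 2) / (2 * τL) :=
  stmt_11_general τL δL h
end

section
/- Let τ_R, δ_R ∈ ℝ with τ_R < -|δ_R + 1|. Then r_R = -(τ_R/2)(1 + √(1 - 4δ_R/τ_R²)) satisfies r_R > (1 - δ_R² - τ_R²)/(2τ_R). -/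
/-!
Write `t = -τR > 0` and `s = √(τR² - 4δR)`, so that the left-hand side is `(t + s) / 2` and the
claim becomes `δR² - 1 < t s`. The hypothesis gives `|δR + 1| < t`, and since
`τR² - 4δR > (δR + 1)² - 4δR = (δR - 1)²` also `|δR - 1| < s`; multiplying,
`δR² - 1 ≤ |δR + 1| |δR - 1| < t s`.
-/

lemma Real.sqrt_one_sub_div_sq (c : ℝ) {τ : ℝ} (hτ : τ ≠ 0) :
    √(1 - c / τ ^ 2) = √(τ ^ 2 - c) / |τ| := by
  rw [one_sub_div (pow_ne_zero 2 hτ), Real.sqrt_div' _ (sq_nonneg τ), Real.sqrt_sq_eq_abs]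

lemma abs_sub_one_lt_sqrt_discrim {τ δ : ℝ} (h : |δ + 1| < |τ|) :
    |δ - 1| < √(τ ^ 2 - 4 * δ) := by
  have hsq : (δ + 1) ^ 2 < τ ^ 2 := sq_lt_sq.mpr h
  rw [Real.lt_sqrt (abs_nonneg _), sq_abs]
  linarith

lemma sq_sub_one_lt_mul {δ t s : ℝ} (ht : |δ + 1| < t) (hs : |δ - 1| < s) :
    δ ^ 2 - 1 < t * s :=
  calc δ ^ 2 - 1 = (δ + 1) * (δ - 1) := by ring
    _ ≤ |(δ + 1) * (δ - 1)| := le_abs_self _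
    _ = |δ + 1| * |δ - 1| := abs_mul _ _
    _ < t * s := mul_lt_mul'' ht hs (abs_nonneg _) (abs_nonneg _)

theorem stmt_12 (τR δR : ℝ) (h : τR < -|δR + 1|) :
    -(τR / 2) * (1 + Real.sqrt (1 - 4 * δR / τR ^ 2)) >
      (1 - δR ^ 2 - τR ^ 2) / (2 * τR) := by
  have hτ : τR < 0 := h.trans_le (neg_nonpos.mpr (abs_nonneg _))
  have ht : |δR + 1| < -τR := by linarith
  have hs : |δR - 1| < √(τR ^ 2 - 4 * δR) :=
    abs_sub_one_lt_sqrt_discrim (by rwa [abs_of_neg hτ])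
  have hprod := sq_sub_one_lt_mul ht hs
  rw [Real.sqrt_one_sub_div_sq _ hτ.ne, abs_of_neg hτ, gt_iff_lt,
    div_lt_iff_of_neg (by linarith)]
  have hlhs : -(τR / 2) * (1 + √(τR ^ 2 - 4 * δR) / -τR) * (2 * τR)
      = -τR ^ 2 + τR * √(τR ^ 2 - 4 * δR) := by
    field_simp [hτ.ne]
    ring
  linarith
end

section
/- Let A = [[τ, 1], [-δ, 0]] be a real 2×2 matrix and let K = [a, b] be a compact interval. Define H(m) = τ² + δ² - 1 + 2τm. If H(a) > 0 and H(b) > 0, then there exists c > 1 such that ‖A v‖ ≥ c ‖v‖ for every vector v in the cone Ψ_K = {α (1, m) : α ∈ ℝ, m ∈ K}. -/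
/-!
For `v = α (1, m)` one has `‖A v‖² = ‖v‖² + α² H(m)`. Since `H` is affine, on `[a, b]` it is
bounded below by `h = min (H a) (H b) > 0`, while `‖v‖² = α² (1 + m²) ≤ α² B` with
`B = 1 + max (a², b²)`. Hence `‖A v‖² ≥ (1 + h / B) ‖v‖²`, and `c = √(1 + h / B)` works.
-/

open Set

theorem min_le_affine_of_mem_Icc {p q a b m : ℝ} (hm : m ∈ Icc a b) :
    min (p + q * a) (p + q * b) ≤ p + q * m := by
  rcases le_total 0 q with hq | hq
  · exact (min_le_left _ _).trans (by nlinarith [hm.1])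
  · exact (min_le_right _ _).trans (by nlinarith [hm.2])

theorem sq_le_max_sq_of_mem_Icc {a b m : ℝ} (hm : m ∈ Icc a b) :
    m ^ 2 ≤ max (a ^ 2) (b ^ 2) := by
  rcases le_total 0 m with h0 | h0
  · exact le_max_of_le_right (by nlinarith [hm.2])
  · exact le_max_of_le_left (by nlinarith [hm.1])

theorem companion_apply_sq_norm_eq (τ δ α m : ℝ) :
    (τ * α + α * m) ^ 2 + (-δ * α) ^ 2 =
      (α ^ 2 + (α * m) ^ 2) + α ^ 2 * (τ ^ 2 + δ ^ 2 - 1 + 2 * τ * m) := by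
  ring

theorem one_add_div_mul_sq_norm_le_companion {τ δ α m h B : ℝ} (hh : 0 ≤ h)
    (hB : 1 + m ^ 2 ≤ B) (hHm : h ≤ τ ^ 2 + δ ^ 2 - 1 + 2 * τ * m) :
    (1 + h / B) * (α ^ 2 + (α * m) ^ 2) ≤ (τ * α + α * m) ^ 2 + (-δ * α) ^ 2 := by
  have hscale : h / B * (1 + m ^ 2) ≤ h := by
    rw [div_mul_eq_mul_div, div_le_iff₀ (by nlinarith [sq_nonneg m])]
    exact mul_le_mul_of_nonneg_left hB hh
  rw [companion_apply_sq_norm_eq]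
  calc (1 + h / B) * (α ^ 2 + (α * m) ^ 2)
      = (α ^ 2 + (α * m) ^ 2) + α ^ 2 * (h / B * (1 + m ^ 2)) := by ring
    _ ≤ (α ^ 2 + (α * m) ^ 2) + α ^ 2 * (τ ^ 2 + δ ^ 2 - 1 + 2 * τ * m) := by
      gcongr
      exact hscale.trans hHm

theorem stmt_13_general (τ δ a b : ℝ)
    (H : ℝ → ℝ) (hH : ∀ m, H m = τ ^ 2 + δ ^ 2 - 1 + 2 * τ * m)
    (hHa : H a > 0) (hHb : H b > 0) :
    ∃ c : ℝ, c > 1 ∧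
      ∀ v : ℝ × ℝ, (∃ α m : ℝ, m ∈ Set.Icc a b ∧ v = (α, α * m)) →
        Real.sqrt ((τ * v.1 + v.2) ^ 2 + (-δ * v.1) ^ 2) ≥
          c * Real.sqrt (v.1 ^ 2 + v.2 ^ 2) := by
  rw [hH] at hHa hHb
  set h := min (τ ^ 2 + δ ^ 2 - 1 + 2 * τ * a) (τ ^ 2 + δ ^ 2 - 1 + 2 * τ * b)
  set B := 1 + max (a ^ 2) (b ^ 2)
  have hh : 0 < h := lt_min hHa hHb
  have hpos : 0 < h / B := div_pos hh (by positivity)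
  refine ⟨√(1 + h / B), Real.lt_sqrt_of_sq_lt (by linarith), ?_⟩
  rintro v ⟨α, m, hm, rfl⟩
  have hHm : h ≤ τ ^ 2 + δ ^ 2 - 1 + 2 * τ * m := min_le_affine_of_mem_Icc hm
  have hB : 1 + m ^ 2 ≤ B := by linarith [sq_le_max_sq_of_mem_Icc hm]
  rw [ge_iff_le, ← Real.sqrt_mul (by positivity)]
  exact Real.sqrt_le_sqrt (one_add_div_mul_sq_norm_le_companion hh.le hB hHm)

theorem stmt_13 (τ δ a b : ℝ) (hab : a ≤ b)
    (H : ℝ → ℝ) (hH : ∀ m, H m = τ ^ 2 + δ ^ 2 - 1 + 2 * τ * m)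
    (hHa : H a > 0) (hHb : H b > 0) :
    ∃ c : ℝ, c > 1 ∧
      ∀ v : ℝ × ℝ, (∃ α m : ℝ, m ∈ Set.Icc a b ∧ v = (α, α * m)) →
        Real.sqrt ((τ * v.1 + v.2) ^ 2 + (-δ * v.1) ^ 2) ≥
          c * Real.sqrt (v.1 ^ 2 + v.2 ^ 2) :=
  stmt_13_general τ δ a b H hH hHa hHb
end
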